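/- arXiv:2110.13574 — 2 statements merged into one kernel-verified Lean document; each statement's English description precedes it below -/
import Mathlib

section
/- Let P be a graded poset and G a copresheaf of abelian groups on P. If Λ and Λ' are both cellular forms of (P,G), then Λ and Λ' are isomorphic as P-graded differential ℤ-modules: there is a family of group isomorphisms Λ_x ≅ Λ'_x (x ∈ P) commuting with the differentials. -/
open CategoryTheory Classical

/-- A rank function making `P` a graded poset: minimal elements have rank `0`, the rank
increases by `1` along covering relations, and is strictly monotone. -/
def IsGrading (P : Type) [PartialOrder P] (r : P → ℕ) : Prop :=
  (∀ x : P, IsMin x → r x = 0) ∧ (∀ x y : P, x ⋖ y → r y = r x + 1) ∧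
    ∀ x y : P, x < y → r x < r y

/-- A cellular form of a pair `(P, G)` where `P` is a poset graded by `r` and `G` is a
copresheaf of abelian groups on `P` (a functor `P ⥤ AddCommGrp`).

It consists of a `P`-graded differential `ℤ`-module `Λ = ⊕_{x∈P} Λ_x`, the differential
being recorded by its components `δ x y : Λ_x →+ Λ_y`, together with the maps
`e x y : Λ_y →+ G(x)` (for `y ≤ x` of rank `0`) realising the isomorphism of copresheaves
`(x ↦ H₀(Λ_{≤x})) ≅ G`, such that:

* `∂` maps `Λ_x` into `⊕_{y⋖x} Λ_y` (fields `delta_support`, `delta_fin`) and `∂∂ = 0`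
  (field `delta_delta`); hence each `Λ_{≤x} = ⊕_{y≤x} Λ_y` is a chain complex graded by
  rank;
* `Λ_{≤x}` has trivial homology in all positive degrees (field `exact_pos`: every cycle
  of positive degree supported below `x` is a boundary of a chain supported below `x`);
* the copresheaf `x ↦ H₀(Λ_{≤x})` (whose extension maps are induced by the inclusions
  `Λ_{≤x} ↪ Λ_{≤x'}`) is isomorphic to `G` via the maps induced by `e` (fields
  `e_natural`, `e_surj`, `e_ker`: `e` is compatible with the extension maps of `G`, and
  the induced map `H₀(Λ_{≤x}) → G(x)` is surjective and injective — an element of degree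
  `0` maps to `0` iff it is a boundary). -/
structure CellularForm (P : Type) [PartialOrder P] (r : P → ℕ)
    (G : P ⥤ AddCommGrpCat.{0}) where
  Λ : P → Type
  [grp : ∀ x, AddCommGroup (Λ x)]
  δ : ∀ x y : P, Λ x →+ Λ y
  e : ∀ x y : P, y ≤ x → r y = 0 → (Λ y →+ G.obj x)
  delta_support : ∀ x y : P, ¬(y ⋖ x) → δ x y = 0
  delta_fin : ∀ (x : P) (a : Λ x), {y : P | δ x y a ≠ 0}.Finite
  delta_delta : ∀ (x z : P) (a : Λ x), (∑ᶠ y : P, δ y z (δ x y a)) = 0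
  exact_pos : ∀ (x : P) (q : ℕ) (a : ∀ y : P, Λ y),
    {y : P | a y ≠ 0}.Finite →
    (∀ y, a y ≠ 0 → y ≤ x ∧ r y = q + 1) →
    (∀ z, (∑ᶠ y : P, δ y z (a y)) = 0) →
    ∃ b : ∀ y : P, Λ y, {y : P | b y ≠ 0}.Finite ∧
      (∀ y, b y ≠ 0 → y ≤ x ∧ r y = q + 2) ∧ ∀ y, a y = ∑ᶠ w : P, δ w y (b w)
  e_natural : ∀ (x x' y : P) (h : y ≤ x) (h' : x ≤ x') (h0 : r y = 0) (a : Λ y),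
    G.map (homOfLE h') (e x y h h0 a) = e x' y (h.trans h') h0 a
  e_surj : ∀ (x : P) (g : G.obj x), ∃ a : ∀ y : P, Λ y,
    {y : P | a y ≠ 0}.Finite ∧ (∀ y, a y ≠ 0 → y ≤ x ∧ r y = 0) ∧
    (∑ᶠ y : P, if h : y ≤ x ∧ r y = 0 then e x y h.1 h.2 (a y) else 0) = g
  e_ker : ∀ (x : P) (a : ∀ y : P, Λ y), {y : P | a y ≠ 0}.Finite →
    (∀ y, a y ≠ 0 → y ≤ x ∧ r y = 0) →
    ((∑ᶠ y : P, if h : y ≤ x ∧ r y = 0 then e x y h.1 h.2 (a y) else 0) = 0 ↔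
      ∃ b : ∀ y : P, Λ y, {y : P | b y ≠ 0}.Finite ∧
        (∀ y, b y ≠ 0 → y ≤ x ∧ r y = 1) ∧ ∀ y, a y = ∑ᶠ w : P, δ w y (b w))

attribute [instance] CellularForm.grp

/-- The property, for a given `P`-graded differential `ℤ`-module `(Λ, δ)`, of being a
cellular form of `(P, G)`; see `CellularForm` for a description of the fields, the only
difference being that here the realising maps `e` are merely required to exist. -/
structure IsCellularForm (P : Type) [PartialOrder P] (r : P → ℕ)
    (G : P ⥤ AddCommGrpCat.{0}) (Λ : P → Type) [inst : ∀ x, AddCommGroup (Λ x)]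
    (δ : ∀ x y : P, Λ x →+ Λ y) : Prop where
  delta_support : ∀ x y : P, ¬(y ⋖ x) → δ x y = 0
  delta_fin : ∀ (x : P) (a : Λ x), {y : P | δ x y a ≠ 0}.Finite
  delta_delta : ∀ (x z : P) (a : Λ x), (∑ᶠ y : P, δ y z (δ x y a)) = 0
  exact_pos : ∀ (x : P) (q : ℕ) (a : ∀ y : P, Λ y),
    {y : P | a y ≠ 0}.Finite →
    (∀ y, a y ≠ 0 → y ≤ x ∧ r y = q + 1) →
    (∀ z, (∑ᶠ y : P, δ y z (a y)) = 0) →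
    ∃ b : ∀ y : P, Λ y, {y : P | b y ≠ 0}.Finite ∧
      (∀ y, b y ≠ 0 → y ≤ x ∧ r y = q + 2) ∧ ∀ y, a y = ∑ᶠ w : P, δ w y (b w)
  hom_zero : ∃ e : ∀ x y : P, y ≤ x → r y = 0 → (Λ y →+ G.obj x),
    (∀ (x x' y : P) (h : y ≤ x) (h' : x ≤ x') (h0 : r y = 0) (a : Λ y),
      G.map (homOfLE h') (e x y h h0 a) = e x' y (h.trans h') h0 a) ∧
    (∀ (x : P) (g : G.obj x), ∃ a : ∀ y : P, Λ y,
      {y : P | a y ≠ 0}.Finite ∧ (∀ y, a y ≠ 0 → y ≤ x ∧ r y = 0) ∧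
      (∑ᶠ y : P, if h : y ≤ x ∧ r y = 0 then e x y h.1 h.2 (a y) else 0) = g) ∧
    (∀ (x : P) (a : ∀ y : P, Λ y), {y : P | a y ≠ 0}.Finite →
      (∀ y, a y ≠ 0 → y ≤ x ∧ r y = 0) →
      ((∑ᶠ y : P, if h : y ≤ x ∧ r y = 0 then e x y h.1 h.2 (a y) else 0) = 0 ↔
        ∃ b : ∀ y : P, Λ y, {y : P | b y ≠ 0}.Finite ∧
          (∀ y, b y ≠ 0 → y ≤ x ∧ r y = 1) ∧ ∀ y, a y = ∑ᶠ w : P, δ w y (b w)))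

/-!
Cellular forms of `(P, G)`, with the families of maps `Λ_x →+ Λ'_x` commuting with the
differentials and with the augmentations to `G`, form a category with exactly one morphism
between any two objects; hence every such morphism is an isomorphism.

Morphisms are built rank by rank. In rank `0`, `Λ_x ≅ H₀(Λ_{≤x}) ≅ G(x)`. In rank `q + 1`,
acyclicity of `Λ_{≤x}` makes `∂` injective on `Λ_x`, with image the `q`-cycles of `Λ_{<x}`
(for `q = 0`: the kernel of the augmentation). So for `a ∈ Λ_x`, the image of `∂a` under the
map already built on lower ranks is a cycle of `Λ'_{<x}`, and it has a unique preimage under `∂'`.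
The same injectivity gives uniqueness.
-/

lemma finite_single_ne_zero {α : Type*} {M : α → Type*} [∀ y, Zero (M y)] (x : α) (a : M x) :
    {y | Pi.single x a y ≠ 0}.Finite :=
  (Set.finite_singleton x).subset fun _ hy => by_contra fun hyx => hy (Pi.single_eq_of_ne hyx a)

variable {P : Type} [PartialOrder P] {r : P → ℕ} {G : P ⥤ AddCommGrpCat.{0}}

namespace IsGrading

lemma monotone (hr : IsGrading P r) : Monotone r :=
  StrictMono.monotone fun x y => hr.2.2 x y

lemma rank_eq_succ_of_covBy (hr : IsGrading P r) {x y : P} (h : y ⋖ x) : r x = r y + 1 :=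
  hr.2.1 y x h

lemma eq_of_le_of_rank_eq (hr : IsGrading P r) {x y : P} (h : y ≤ x) (hE : r y = r x) :
    y = x :=
  h.eq_or_lt.resolve_right fun hlt => (hr.2.2 _ _ hlt).ne hE

end IsGrading

/-- `b` is a chain of degree `k` in `⊕_{y ≤ x} M_y`. -/
def IsChainBelow {M : P → Type} [∀ y, Zero (M y)] (r : P → ℕ) (x : P) (k : ℕ)
    (b : ∀ y, M y) : Prop :=
  ∀ y, b y ≠ 0 → y ≤ x ∧ r y = k

section Chains

variable {M : P → Type} [∀ y, Zero (M y)]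

lemma IsChainBelow.single {x : P} {k : ℕ} (hx : r x = k) (a : M x) :
    IsChainBelow r x k (Pi.single x a) := by
  intro y hy
  by_cases hyx : y = x
  · subst hyx
    exact ⟨le_rfl, hx⟩
  · exact absurd (Pi.single_eq_of_ne hyx a) hy

lemma IsChainBelow.eq_zero (hr : IsGrading P r) {x : P} {k : ℕ} {b : ∀ y, M y}
    (hb : IsChainBelow r x k b) (hk : r x < k) : b = 0 := by
  funext y
  by_contra hy
  obtain ⟨hyx, rfl⟩ := hb y hy
  exact (hr.monotone hyx).not_gt hk

lemma IsChainBelow.eq_single (hr : IsGrading P r) {x : P} {b : ∀ y, M y}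
    (hb : IsChainBelow r x (r x) b) : b = Pi.single x (b x) := by
  funext y
  by_cases hyx : y = x
  · subst hyx
    simp
  · rw [Pi.single_eq_of_ne hyx]
    by_contra hy
    obtain ⟨hle, hrk⟩ := hb y hy
    exact hyx (hr.eq_of_le_of_rank_eq hle hrk)

end Chains

namespace CellularForm

/-- The map `Λ_{≤x}` in degree `0` → `G(x)` inducing `H₀(Λ_{≤x}) ≅ G(x)`. -/
noncomputable def augmentation (C : CellularForm P r G) (x : P) (a : ∀ y, C.Λ y) : G.obj x :=
  ∑ᶠ y : P, if h : y ≤ x ∧ r y = 0 then C.e x y h.1 h.2 (a y) else 0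

variable (C : CellularForm P r G)

lemma delta_apply_eq_zero {x y : P} (h : ¬y ⋖ x) (a : C.Λ x) : C.δ x y a = 0 := by
  rw [C.delta_support x y h]
  rfl

lemma covBy_of_delta_ne_zero {x y : P} {a : C.Λ x} (h : C.δ x y a ≠ 0) : y ⋖ x :=
  by_contra fun hyx => h (C.delta_apply_eq_zero hyx a)

lemma isChainBelow_delta (hr : IsGrading P r) {x : P} {q : ℕ} (hx : r x = q + 1)
    (a : C.Λ x) : IsChainBelow r x q fun y => C.δ x y a := by
  intro y hy
  have hyx := C.covBy_of_delta_ne_zero hy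
  have := hr.rank_eq_succ_of_covBy hyx
  exact ⟨hyx.le, by omega⟩

lemma delta_eq_zero_of_rank_eq_zero (hr : IsGrading P r) {x : P} (hx : r x = 0) (y : P)
    (a : C.Λ x) : C.δ x y a = 0 :=
  C.delta_apply_eq_zero (fun hyx => by have := hr.rank_eq_succ_of_covBy hyx; omega) a

lemma finsum_delta_single (x y : P) (a : C.Λ x) :
    ∑ᶠ w, C.δ w y (Pi.single x a w) = C.δ x y a := by
  rw [finsum_eq_single _ x fun w hw => by rw [Pi.single_eq_of_ne hw, map_zero],
    Pi.single_eq_same]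

lemma finsum_delta_eq_zero (hr : IsGrading P r) {x : P} {b : ∀ y, C.Λ y}
    (hb : IsChainBelow r x (r x + 1) b) (y : P) : ∑ᶠ w, C.δ w y (b w) = 0 := by
  simp [hb.eq_zero hr (Nat.lt_succ_self _)]

lemma finsum_delta_eq_delta (hr : IsGrading P r) {x : P} {b : ∀ y, C.Λ y}
    (hb : IsChainBelow r x (r x) b) (y : P) : ∑ᶠ w, C.δ w y (b w) = C.δ x y (b x) := by
  rw [hb.eq_single hr, finsum_delta_single, Pi.single_eq_same]

lemma augmentation_single {x : P} (hx : r x = 0) (a : C.Λ x) :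
    C.augmentation x (Pi.single x a) = C.e x x le_rfl hx a := by
  rw [augmentation, finsum_eq_single _ x fun y hy => ?_, dif_pos ⟨le_rfl, hx⟩, Pi.single_eq_same]
  split_ifs <;> simp [Pi.single_eq_of_ne hy]

lemma eq_zero_of_forall_delta_eq_zero (hr : IsGrading P r) {x : P} (hx : r x ≠ 0)
    {a : C.Λ x} (h : ∀ y, C.δ x y a = 0) : a = 0 := by
  obtain ⟨q, hq⟩ := Nat.exists_eq_succ_of_ne_zero hx
  obtain ⟨b, -, hb, hab⟩ := C.exact_pos x q (Pi.single x a) (finite_single_ne_zero x a)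
    (IsChainBelow.single hq a) fun z => by rw [finsum_delta_single, h]
  have := hab x
  rwa [Pi.single_eq_same, C.finsum_delta_eq_zero hr (by rwa [hq])] at this

lemma ext_of_delta (hr : IsGrading P r) {x : P} (hx : r x ≠ 0) {a b : C.Λ x}
    (h : ∀ y, C.δ x y a = C.δ x y b) : a = b :=
  sub_eq_zero.mp <| C.eq_zero_of_forall_delta_eq_zero hr hx fun y => by rw [map_sub, h, sub_self]

lemma e_self_bijective (hr : IsGrading P r) {x : P} (hx : r x = 0) :
    Function.Bijective (C.e x x le_rfl hx) := by
  refine ⟨(injective_iff_map_eq_zero _).mpr fun a ha => ?_, fun g => ?_⟩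
  · obtain ⟨b, -, hb, hab⟩ := (C.e_ker x (Pi.single x a) (finite_single_ne_zero x a)
      (IsChainBelow.single hx a)).mp (by rwa [← augmentation, augmentation_single])
    have := hab x
    rwa [Pi.single_eq_same, C.finsum_delta_eq_zero hr (by rwa [hx])] at this
  · obtain ⟨a, -, ha, rfl⟩ := C.e_surj x g
    refine ⟨a x, ?_⟩
    rw [← augmentation_single, ← (show IsChainBelow r x (r x) a by rwa [hx]).eq_single hr]
    rfl

noncomputable def rankZeroEquiv (hr : IsGrading P r) {x : P} (hx : r x = 0) :
    C.Λ x ≃+ G.obj x :=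
  AddEquiv.ofBijective (C.e x x le_rfl hx) (C.e_self_bijective hr hx)

structure IsHomBelow (C C' : CellularForm P r G) (n : ℕ) (f : ∀ x, C.Λ x →+ C'.Λ x) :
    Prop where
  comm_δ : ∀ x y, r x < n → ∀ a, f y (C.δ x y a) = C'.δ x y (f x a)
  comm_e : ∀ x x' (h : x ≤ x') (h0 : r x = 0), r x < n → ∀ a,
    C'.e x' x h h0 (f x a) = C.e x' x h h0 a

structure IsHom (C C' : CellularForm P r G) (f : ∀ x, C.Λ x →+ C'.Λ x) : Prop where
  comm_δ : ∀ x y a, f y (C.δ x y a) = C'.δ x y (f x a)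
  comm_e : ∀ x x' (h : x ≤ x') (h0 : r x = 0) a, C'.e x' x h h0 (f x a) = C.e x' x h h0 a

variable {C} {C' : CellularForm P r G}

lemma exists_isHomBelow_one (hr : IsGrading P r) (C C' : CellularForm P r G) :
    ∃ f, IsHomBelow C C' 1 f := by
  refine ⟨fun x => if hx : r x = 0 then
    (C'.rankZeroEquiv hr hx).symm.toAddMonoidHom.comp (C.e x x le_rfl hx) else 0, ?_, ?_⟩
  · intro x y hx a
    rw [C.delta_eq_zero_of_rank_eq_zero hr (by omega),
      C'.delta_eq_zero_of_rank_eq_zero hr (by omega), map_zero]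
  · intro x x' h h0 _ a
    have hx : C'.e x x le_rfl h0 ((C'.rankZeroEquiv hr h0).symm (C.e x x le_rfl h0 a)) =
        C.e x x le_rfl h0 a :=
      (C'.rankZeroEquiv hr h0).apply_symm_apply _
    simp only [dif_pos h0, AddMonoidHom.comp_apply, AddEquiv.coe_toAddMonoidHom]
    rw [← C'.e_natural x x' x le_rfl h h0, hx, C.e_natural]

namespace IsHomBelow

variable {n : ℕ} {f : ∀ x, C.Λ x →+ C'.Λ x}

lemma mono {m : ℕ} (hf : IsHomBelow C C' n f) (hmn : m ≤ n) : IsHomBelow C C' m f :=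
  ⟨fun x y hx => hf.comm_δ x y (by omega), fun x x' h h0 hx => hf.comm_e x x' h h0 (by omega)⟩

lemma finsum_delta_map (hf : IsHomBelow C C' n f) {c : ∀ y, C.Λ y}
    (hfin : {y | c y ≠ 0}.Finite) (hc : ∀ y, c y ≠ 0 → r y < n) (z : P) :
    ∑ᶠ y, C'.δ y z (f y (c y)) = f z (∑ᶠ y, C.δ y z (c y)) := by
  rw [(f z).map_finsum (hfin.subset fun y hy h => hy (by simp [h]))]
  refine finsum_congr fun y => ?_
  by_cases hy : c y = 0
  · simp [hy]
  · exact (hf.comm_δ y z (hc y hy) _).symm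

lemma augmentation_map (hf : IsHomBelow C C' n f) (hn : 0 < n) (x : P) (c : ∀ y, C.Λ y) :
    C'.augmentation x (fun y => f y (c y)) = C.augmentation x c := by
  refine finsum_congr fun y => ?_
  split_ifs with h
  · exact hf.comm_e y x h.1 h.2 (by omega) (c y)
  · rfl

lemma exists_delta_eq (hr : IsGrading P r) {q : ℕ} (hf : IsHomBelow C C' (q + 1) f) {x : P}
    (hx : r x = q + 1) (a : C.Λ x) : ∃ b : C'.Λ x, ∀ y, C'.δ x y b = f y (C.δ x y a) := by
  set c : ∀ y, C'.Λ y := fun y => f y (C.δ x y a)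
  have hc0 : ∀ y, c y ≠ 0 → C.δ x y a ≠ 0 := fun y hy h => hy (by simp [c, h])
  have hfin : {y | c y ≠ 0}.Finite := (C.delta_fin x a).subset hc0
  have hchain : IsChainBelow r x q c := fun y hy => C.isChainBelow_delta hr hx a y (hc0 y hy)
  obtain ⟨b, -, hb, hcb⟩ : ∃ b : ∀ y, C'.Λ y, {y | b y ≠ 0}.Finite ∧ IsChainBelow r x (q + 1) b ∧
      ∀ y, c y = ∑ᶠ w, C'.δ w y (b w) := by
    rcases q with _ | p
    · refine (C'.e_ker x c hfin hchain).mp ?_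
      rw [← augmentation, hf.augmentation_map Nat.one_pos]
      refine (C.e_ker x _ (C.delta_fin x a) (C.isChainBelow_delta hr hx a)).mpr
        ⟨Pi.single x a, finite_single_ne_zero x a, IsChainBelow.single hx a, fun y => ?_⟩
      rw [finsum_delta_single]
    · refine C'.exact_pos x p c hfin hchain fun z => ?_
      rw [hf.finsum_delta_map (C.delta_fin x a) fun y hy => by
        have := (C.isChainBelow_delta hr hx a y hy).2; omega, C.delta_delta, map_zero]
  refine ⟨b x, fun y => ?_⟩
  rw [← C'.finsum_delta_eq_delta hr (by rwa [hx]), ← hcb]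

lemma exists_extension (hr : IsGrading P r) {q : ℕ} (hf : IsHomBelow C C' (q + 1) f) {x : P}
    (hx : r x = q + 1) : ∃ g : C.Λ x →+ C'.Λ x, ∀ y a, C'.δ x y (g a) = f y (C.δ x y a) := by
  choose g hg using hf.exists_delta_eq hr hx
  refine ⟨AddMonoidHom.mk' g fun a b => C'.ext_of_delta hr (by omega) fun y => ?_,
    fun y a => hg a y⟩
  simp only [map_add, hg]

lemma exists_succ (hr : IsGrading P r) (hf : IsHomBelow C C' n f) :
    ∃ g, IsHomBelow C C' (n + 1) g := by
  rcases n with _ | q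
  · exact exists_isHomBelow_one hr C C'
  choose g hg using fun x (hx : r x = q + 1) => hf.exists_extension hr hx
  refine ⟨fun x => if hx : r x = q + 1 then g x hx else f x, ?_, ?_⟩
  · intro x y hx a
    by_cases hyx : y ⋖ x
    · have hy := hr.rank_eq_succ_of_covBy hyx
      rw [dif_neg (show r y ≠ q + 1 by omega)]
      split_ifs with hxq
      · exact (hg x hxq y a).symm
      · exact hf.comm_δ x y (by omega) a
    · simp [C.delta_apply_eq_zero hyx, C'.delta_apply_eq_zero hyx]
  · intro x x' h h0 _ a
    rw [dif_neg (by omega)]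
    exact hf.comm_e x x' h h0 (by omega) a

lemma apply_eq (hr : IsGrading P r) {g : ∀ x, C.Λ x →+ C'.Λ x} (hf : IsHomBelow C C' n f)
    (hg : IsHomBelow C C' n g) {x : P} (hx : r x < n) : f x = g x := by
  obtain ⟨k, hk⟩ : ∃ k, r x = k := ⟨_, rfl⟩
  induction k using Nat.strong_induction_on generalizing x with
  | _ k ih =>
  ext a
  rcases Nat.eq_zero_or_pos k with rfl | hpos
  · apply (C'.e_self_bijective hr hk).1
    rw [hf.comm_e x x le_rfl hk hx, hg.comm_e x x le_rfl hk hx]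
  · refine C'.ext_of_delta hr (by omega) fun y => ?_
    by_cases hyx : y ⋖ x
    · have hy := hr.rank_eq_succ_of_covBy hyx
      rw [← hf.comm_δ x y hx, ← hg.comm_δ x y hx, ih (r y) (by omega) (by omega) rfl]
    · rw [C'.delta_apply_eq_zero hyx, C'.delta_apply_eq_zero hyx]

end IsHomBelow

lemma exists_isHomBelow (hr : IsGrading P r) (C C' : CellularForm P r G) (n : ℕ) :
    ∃ f, IsHomBelow C C' n f := by
  induction n with
  | zero => exact ⟨0, fun _ _ h => absurd h (Nat.not_lt_zero _),
      fun _ _ _ _ h => absurd h (Nat.not_lt_zero _)⟩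
  | succ n ih => exact ih.elim fun f hf => hf.exists_succ hr

lemma exists_isHom (hr : IsGrading P r) (C C' : CellularForm P r G) : ∃ f, IsHom C C' f := by
  choose Φ hΦ using exists_isHomBelow hr C C'
  refine ⟨fun x => Φ (r x + 1) x, fun x y a => ?_, fun x x' h h0 a =>
    (hΦ _).comm_e x x' h h0 (Nat.lt_succ_self _) a⟩
  by_cases hyx : y ⋖ x
  · have hy := hr.rank_eq_succ_of_covBy hyx
    rw [(hΦ (r y + 1)).apply_eq hr ((hΦ (r x + 1)).mono (by omega)) (Nat.lt_succ_self _)]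
    exact (hΦ _).comm_δ x y (Nat.lt_succ_self _) a
  · simp [C.delta_apply_eq_zero hyx, C'.delta_apply_eq_zero hyx]

namespace IsHom

lemma isHomBelow {f : ∀ x, C.Λ x →+ C'.Λ x} (hf : IsHom C C' f) (n : ℕ) :
    IsHomBelow C C' n f :=
  ⟨fun x y _ => hf.comm_δ x y, fun x x' h h0 _ => hf.comm_e x x' h h0⟩

lemma id (C : CellularForm P r G) : IsHom C C fun x => AddMonoidHom.id (C.Λ x) :=
  ⟨fun _ _ _ => rfl, fun _ _ _ _ _ => rfl⟩

lemma comp {C'' : CellularForm P r G} {f : ∀ x, C.Λ x →+ C'.Λ x} {g : ∀ x, C'.Λ x →+ C''.Λ x}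
    (hg : IsHom C' C'' g) (hf : IsHom C C' f) : IsHom C C'' fun x => (g x).comp (f x) :=
  ⟨fun x y a => by simp [hf.comm_δ, hg.comm_δ], fun x x' h h0 a => by simp [hf.comm_e, hg.comm_e]⟩

lemma unique (hr : IsGrading P r) {f g : ∀ x, C.Λ x →+ C'.Λ x} (hf : IsHom C C' f)
    (hg : IsHom C C' g) : f = g :=
  funext fun x => (hf.isHomBelow (r x + 1)).apply_eq hr (hg.isHomBelow _) (Nat.lt_succ_self _)

end IsHom

end CellularForm

/-- **Statement 3 (uniqueness of the cellular form).**  Let `P` be a graded poset and `G`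
a copresheaf of abelian groups on `P`.  Any two cellular forms `Λ, Λ'` of `(P,G)` are
isomorphic as `P`-graded differential `ℤ`-modules: there are group isomorphisms
`Λ_x ≅ Λ'_x` commuting with the differentials. -/
theorem statement3 (P : Type) [PartialOrder P] (r : P → ℕ) (hr : IsGrading P r)
    (G : P ⥤ AddCommGrpCat.{0}) (C C' : CellularForm P r G) :
    ∃ φ : ∀ x : P, C.Λ x ≃+ C'.Λ x,
      ∀ (x y : P) (a : C.Λ x), φ y (C.δ x y a) = C'.δ x y (φ x a) := by
  obtain ⟨f, hf⟩ := CellularForm.exists_isHom hr C C'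
  obtain ⟨g, hg⟩ := CellularForm.exists_isHom hr C' C
  have hgf := (hg.comp hf).unique hr (CellularForm.IsHom.id C)
  have hfg := (hf.comp hg).unique hr (CellularForm.IsHom.id C')
  exact ⟨fun x => (f x).toAddEquiv (g x) (congrFun hgf x) (congrFun hfg x), hf.comm_δ⟩
end

section
/- For any simple graph Γ on [n] and positive integers k, m: the poset L_k^m(Γ) is a join semilattice; the projection π : L_k^m(Γ) → L(Γ) preserves joins; and for any I, J ∈ L(Γ), θ, ν ∈ C_I^m with θ ⋖ ν (θ covered by ν in C_I^m), and ψ ∈ C_J^m, either θ∨ψ ⋖ ν∨ψ or θ∨ψ = ν∨ψ in L_k^m(Γ). -/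
open Classical

noncomputable section

/-- A partial coloring matrix over a partition `I` of `[n]` (an element of the fiber
`C_I^m` of `L_k^m`).  The entry of the matrix at a block `p` of `I` with at least two
elements and a column `t ∈ [m]` is either a `ℤ_k`-coloring of `p` (an equivalence class
of functions `p → ℤ/k` modulo translation) or an undefined symbol `?`.  We encode a
coloring `φ` by its coboundary `d t i j = φ(i) - φ(j)` (which determines it exactly up to
translation), and an undefined entry by `d t i j = none` on its block. -/
structure PColMat (n m k : ℕ) where
  I : Setoid (Fin n)
  d : Fin m → Fin n → Fin n → Option (ZMod k)
  rel_of_def : ∀ t i j, d t i j ≠ none → I i j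
  big_of_def : ∀ t i j, d t i j ≠ none → ∃ l, I l i ∧ l ≠ i
  uniform : ∀ t i j i' j', I i j → I i i' → I i j' → d t i j = none → d t i' j' = none
  cocycle : ∀ t i j l (a b : ZMod k), d t i j = some a → d t j l = some b →
    d t i l = some (a + b)

namespace PColMat

variable {n m k : ℕ}

theorem ext' {a b : PColMat n m k} (h1 : a.I = b.I) (h2 : a.d = b.d) : a = b := by
  cases a; cases b; cases h1; cases h2; rfl

/-- The partial order on partial coloring matrices: `a ≤ b` iff the partition of `a`
refines the partition of `b` and `a` agrees with the restriction `b|_{I(a)}` wherever the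
latter is defined, i.e. `a` is obtained from `b|_{I(a)}` by completing some `?` entries. -/
instance : PartialOrder (PColMat n m k) where
  le a b := a.I ≤ b.I ∧
    ∀ t i j (v : ZMod k), a.I i j → b.d t i j = some v → a.d t i j = some v
  le_refl a := ⟨le_rfl, fun _ _ _ _ _ h => h⟩
  le_trans a b c hab hbc := ⟨hab.1.trans hbc.1,
    fun t i j v hij h => hab.2 t i j v hij (hbc.2 t i j v (hab.1 hij) h)⟩
  le_antisymm a b hab hba := by
    have hI : a.I = b.I := le_antisymm hab.1 hba.1
    refine ext' hI ?_
    funext t i j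
    rcases hb : b.d t i j with _ | v
    · rcases ha : a.d t i j with _ | w
      · rfl
      · exfalso
        have hrel : b.I i j := hI ▸ a.rel_of_def t i j (by simp [ha])
        have h2 := hba.2 t i j w hrel ha
        rw [hb] at h2; cases h2
    · have hrel : a.I i j := by
        have := b.rel_of_def t i j (by simp [hb])
        rw [hI]; exact this
      exact hab.2 t i j v hrel hb

/-- The set of undefined ("?") entries of a partial coloring matrix: pairs `(p, t)` where
`p` is a block of the partition with at least two elements and the entry of the matrix at
`(p, t)` is undefined. -/
def Ud (θ : PColMat n m k) : Set (Set (Fin n) × Fin m) :=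
  {pt | pt.1 ∈ θ.I.classes ∧ 2 ≤ Nat.card pt.1 ∧ ∀ i ∈ pt.1, θ.d pt.2 i i = none}

/-- The fiber rank `r_f`: number of undefined entries. -/
def rf (θ : PColMat n m k) : ℕ := Nat.card θ.Ud

/-- The base rank `r_b`: the rank of the underlying partition in the partition lattice,
i.e. `n` minus the number of blocks. -/
def rb (θ : PColMat n m k) : ℕ := n - Nat.card (Quotient θ.I)

/-- `η` is a completion of `θ`: it lies below `θ` in the same fiber and has no
undefined entries. -/
def IsCompletion (η θ : PColMat n m k) : Prop := η.I = θ.I ∧ η ≤ θ ∧ rf η = 0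

end PColMat

/-- The rank of a partition of `[n]`: `n` minus the number of blocks. -/
def prank (n : ℕ) (I : Setoid (Fin n)) : ℕ := n - Nat.card (Quotient I)

/-- The bond lattice of a simple graph `Γ` on `[n]`: partitions all of whose blocks
induce connected subgraphs of `Γ`. -/
def bondLattice (n : ℕ) (Γ : SimpleGraph (Fin n)) : Set (Setoid (Fin n)) :=
  {I | ∀ p ∈ I.classes, (Γ.induce p).Connected}

/-- `L_k^m(Γ)`: the disjoint union of the fibers `C_I^m` over the partitions `I` in the
bond lattice of `Γ`, with the partial order described above. -/
def LkmG (n m k : ℕ) (Γ : SimpleGraph (Fin n)) : Type :=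
  {θ : PColMat n m k // θ.I ∈ bondLattice n Γ}

instance {n m k : ℕ} {Γ : SimpleGraph (Fin n)} : PartialOrder (LkmG n m k Γ) :=
  Subtype.partialOrder _

namespace LkmG

variable {n m k : ℕ} {Γ : SimpleGraph (Fin n)}

/-- Covering relation inside a fiber `C_I^m` of `L_k^m(Γ)`. -/
def FiberCovBy (ψ θ : LkmG n m k Γ) : Prop :=
  ψ.1.I = θ.1.I ∧ ψ < θ ∧ ∀ z : LkmG n m k Γ, z.1.I = θ.1.I → ψ < z → ¬ z < θ

/-- `η` is a completion of `θ` inside `L_k^m(Γ)`. -/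
def IsCompletionL (η θ : LkmG n m k Γ) : Prop :=
  η.1.I = θ.1.I ∧ η ≤ θ ∧ PColMat.rf η.1 = 0

end LkmG

/-!
The join of `a` and `b` lives over `a.I ⊔ b.I`: in each column, a block of `a.I ⊔ b.I` is colored
when the colorings of `a` and `b` on its pieces glue to a coloring of the whole block (unique up
to translation, since the pieces connect the block), and is `?` otherwise. Blocks of `I ⊔ J` stay
connected in `Γ` for the same reason.

If `θ ⋖ ν` in a fiber, `θ` fills in exactly one `?` of `ν`: were there two, completing only one
of them would give an element strictly in between. Hence `θ ⊔ ψ` and `ν ⊔ ψ` can only differ in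
that column on the block of `I ⊔ J` containing it, where `ν ⊔ ψ` has `?`; and anything between
two matrices differing only there is one of them.
-/

namespace Setoid

variable {α : Type*} {r s : Setoid α}

theorem sup_rel_induction {a : α} {P : α → Prop} (ha : P a)
    (hr : ∀ x y, (r ⊔ s) a x → r x y → P x → P y)
    (hs : ∀ x y, (r ⊔ s) a x → s x y → P x → P y) {x : α} (hx : (r ⊔ s) a x) : P x := by
  let φ : α → Prop := fun x => (r ⊔ s) a x ∧ P x
  have le_ker : ∀ t : Setoid α, t ≤ r ⊔ s → (∀ x y, (r ⊔ s) a x → t x y → P x → P y) →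
      t ≤ ker φ := by
    intro t ht hP x y hxy
    have hxy' := ht hxy
    exact ker_def.mpr (propext
      ⟨fun ⟨hax, hPx⟩ => ⟨(r ⊔ s).trans' hax hxy', hP x y hax hxy hPx⟩,
        fun ⟨hay, hPy⟩ =>
          ⟨(r ⊔ s).trans' hay ((r ⊔ s).symm' hxy'), hP y x hay (t.symm' hxy) hPy⟩⟩)
  have hφ : φ a = φ x :=
    ker_def.mp (sup_le (le_ker r le_sup_left hr) (le_ker s le_sup_right hs) hx)
  exact (hφ ▸ ⟨(r ⊔ s).refl' a, ha⟩ : φ x).2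

end Setoid

theorem SimpleGraph.connected_induce_of_mem_sup_classes {V : Type*} {G : SimpleGraph V}
    {r s : Setoid V} (hr : ∀ p ∈ r.classes, (G.induce p).Connected)
    (hs : ∀ p ∈ s.classes, (G.induce p).Connected) :
    ∀ p ∈ (r ⊔ s).classes, (G.induce p).Connected := by
  rintro _ ⟨y, rfl⟩
  let K := r ⊔ s
  let P : V → Prop := fun x =>
    ∃ hx : K x y, (G.induce {x | K x y}).Reachable ⟨y, K.refl' y⟩ ⟨x, hx⟩
  have step : ∀ t : Setoid V, t ≤ K → (∀ q ∈ t.classes, (G.induce q).Connected) →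
      ∀ x z, K y x → t x z → P x → P z := by
    rintro t ht hc x z - hxz ⟨hx, hyx⟩
    have hz : K z y := K.trans' (K.symm' (ht hxz)) hx
    have hsub : {w | t w z} ⊆ {x | K x y} := fun w hw => K.trans' (ht hw) hz
    exact ⟨hz, hyx.trans (((hc _ (t.mem_classes z)).preconnected ⟨x, hxz⟩ ⟨z, t.refl' z⟩).map
      (G.induceHomOfLE hsub).toHom)⟩
  have reach : ∀ x, K y x → P x := fun x =>
    Setoid.sup_rel_induction ⟨K.refl' y, SimpleGraph.Reachable.refl _⟩
      (step r le_sup_left hr) (step s le_sup_right hs)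
  rw [SimpleGraph.connected_iff_exists_forall_reachable]
  exact ⟨⟨y, K.refl' y⟩, fun ⟨x, hx⟩ => (reach x (K.symm' hx)).2⟩

theorem sup_mem_bondLattice {n : ℕ} {Γ : SimpleGraph (Fin n)} {I J : Setoid (Fin n)}
    (hI : I ∈ bondLattice n Γ) (hJ : J ∈ bondLattice n Γ) : I ⊔ J ∈ bondLattice n Γ :=
  SimpleGraph.connected_induce_of_mem_sup_classes hI hJ

namespace PColMat

variable {n m k : ℕ} {a a' b z : PColMat n m k} {t t₀ : Fin m} {i j i₀ : Fin n}

theorem d_eq_none_congr {i' j' : Fin n} (hj : a.I i j) (hi' : a.I i i') (hj' : a.I i j') :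
    a.d t i j = none ↔ a.d t i' j' = none :=
  ⟨a.uniform t i j i' j' hj hi' hj',
    a.uniform t i' j' i j (a.I.trans' (a.I.symm' hi') hj') (a.I.symm' hi')
      (a.I.trans' (a.I.symm' hi') hj)⟩

theorem eq_zero_of_d_self {v : ZMod k} (h : a.d t i i = some v) : v = 0 := by
  have h2 := a.cocycle t i i i v v h h
  rw [h, Option.some_inj] at h2
  exact left_eq_add.mp h2

theorem d_swap {v : ZMod k} (h : a.d t i j = some v) : a.d t j i = some (-v) := by
  have hij : a.I i j := a.rel_of_def t i j (by simp [h])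
  obtain ⟨w, hw⟩ : ∃ w, a.d t j i = some w := Option.ne_none_iff_exists'.mp fun hn => by
    rw [d_eq_none_congr (a.I.symm' hij) (a.I.symm' hij) (a.I.refl' j), h] at hn
    exact Option.some_ne_none v hn
  have hvw : v + w = 0 := eq_zero_of_d_self (a.cocycle t i j i v w h hw)
  rw [hw, eq_neg_of_add_eq_zero_right hvw]

theorem exists_coloring (h : a.d t i j ≠ none) :
    ∃ f : Fin n → ZMod k, ∀ x y, a.I i x → a.I x y → a.d t x y = some (f x - f y) := by
  have hij := a.rel_of_def t i j h
  have hdef : ∀ x, a.I i x → ∃ v, a.d t x i = some v := fun x hx =>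
    Option.ne_none_iff_exists'.mp fun hn => h ((d_eq_none_congr hij hx (a.I.refl' i)).mpr hn)
  choose! f hf using hdef
  refine ⟨f, fun x y hx hxy => ?_⟩
  rw [sub_eq_add_neg]
  exact a.cocycle t x i y _ _ (hf x hx) (d_swap (hf y (a.I.trans' hx hxy)))

theorem eq_of_le_of_d_self (hle : a ≤ b) (hI : a.I = b.I)
    (h : ∀ t i, a.d t i i ≠ none → b.d t i i ≠ none) : a = b := by
  refine ext' hI (funext₃ fun t i j => ?_)
  rcases hb : b.d t i j with _ | v
  · by_contra ha
    have hij := a.rel_of_def t i j ha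
    refine h t i (fun hn => ha ?_)
      ((d_eq_none_congr (hI ▸ hij) (b.I.refl' i) (b.I.refl' i)).mp hb)
    exact (d_eq_none_congr (a.I.refl' i) (a.I.refl' i) hij).mp hn
  · exact hle.2 t i j v (hI ▸ b.rel_of_def t i j (by simp [hb])) hb

def IsCommonColoring (a b : PColMat n m k) (t : Fin m) (i : Fin n) (f : Fin n → ZMod k) :
    Prop :=
  ∀ x y, (a.I ⊔ b.I) i x →
    (a.I x y → a.d t x y = some (f x - f y)) ∧ (b.I x y → b.d t x y = some (f x - f y))

namespace IsCommonColoring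

variable {f g : Fin n → ZMod k}

theorem of_rel {i' : Fin n} (hf : IsCommonColoring a b t i f) (h : (a.I ⊔ b.I) i i') :
    IsCommonColoring a b t i' f :=
  fun x y hx => hf x y ((a.I ⊔ b.I).trans' h hx)

theorem sub_eq_sub (hf : IsCommonColoring a b t i f) (hg : IsCommonColoring a b t i g)
    {x y : Fin n} (hx : (a.I ⊔ b.I) i x) (hy : (a.I ⊔ b.I) i y) :
    f x - f y = g x - g y := by
  have step : ∀ x y, f x - f y = g x - g y → f x - g x = f i - g i → f y - g y = f i - g i :=
    fun x y hxy hx => by linear_combination hx - hxy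
  have hconst : ∀ z, (a.I ⊔ b.I) i z → f z - g z = f i - g i := fun z =>
    Setoid.sup_rel_induction (P := fun z => f z - g z = f i - g i) rfl
      (fun x y hx hxy => step x y (Option.some_inj.mp
        (((hf x y hx).1 hxy).symm.trans ((hg x y hx).1 hxy))))
      (fun x y hx hxy => step x y (Option.some_inj.mp
        (((hf x y hx).2 hxy).symm.trans ((hg x y hx).2 hxy))))
  linear_combination hconst x hx - hconst y hy

end IsCommonColoring

def joinD (a b : PColMat n m k) (t : Fin m) (i j : Fin n) : Option (ZMod k) :=
  if h : (a.I ⊔ b.I) i j ∧ ∃ f, IsCommonColoring a b t i f then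
    some (h.2.choose i - h.2.choose j)
  else none

theorem joinD_eq_some_iff {v : ZMod k} : joinD a b t i j = some v ↔
    (a.I ⊔ b.I) i j ∧ ∃ f, IsCommonColoring a b t i f ∧ f i - f j = v := by
  unfold joinD
  split_ifs with h
  · refine ⟨fun hv => ⟨h.1, _, h.2.choose_spec, Option.some_inj.mp hv⟩, ?_⟩
    rintro ⟨-, f, hf, rfl⟩
    rw [h.2.choose_spec.sub_eq_sub hf ((a.I ⊔ b.I).refl' i) h.1]
  · exact ⟨nofun, fun ⟨hij, f, hf, _⟩ => h ⟨hij, f, hf⟩⟩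

theorem joinD_ne_none_iff :
    joinD a b t i j ≠ none ↔ (a.I ⊔ b.I) i j ∧ ∃ f, IsCommonColoring a b t i f := by
  rw [Option.ne_none_iff_exists']
  simp only [joinD_eq_some_iff]
  exact ⟨fun ⟨_, hij, f, hf, _⟩ => ⟨hij, f, hf⟩, fun ⟨hij, f, hf⟩ => ⟨_, hij, f, hf, rfl⟩⟩

protected def sup (a b : PColMat n m k) : PColMat n m k where
  I := a.I ⊔ b.I
  d := joinD a b
  rel_of_def _ _ _ h := (joinD_ne_none_iff.mp h).1
  big_of_def t i _ h := by
    obtain ⟨-, f, hf⟩ := joinD_ne_none_iff.mp h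
    obtain ⟨l, hl, hli⟩ :=
      a.big_of_def t i i (by simp [(hf i i ((a.I ⊔ b.I).refl' i)).1 (a.I.refl' i)])
    exact ⟨l, le_sup_left (α := Setoid (Fin n)) hl, hli⟩
  uniform t i j i' j' hij hii' hij' h := by
    contrapose! h
    obtain ⟨-, f, hf⟩ := joinD_ne_none_iff.mp h
    exact joinD_ne_none_iff.mpr ⟨hij, f, hf.of_rel ((a.I ⊔ b.I).symm' hii')⟩
  cocycle t i j l v w hv hw := by
    obtain ⟨hij, f, hf, rfl⟩ := joinD_eq_some_iff.mp hv
    obtain ⟨hjl, g, hg, rfl⟩ := joinD_eq_some_iff.mp hw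
    refine joinD_eq_some_iff.mpr ⟨(a.I ⊔ b.I).trans' hij hjl, f, hf, ?_⟩
    rw [← (hf.of_rel hij).sub_eq_sub hg ((a.I ⊔ b.I).refl' j) hjl]
    ring

instance : SemilatticeSup (PColMat n m k) where
  sup := PColMat.sup
  le_sup_left a b := by
    refine ⟨le_sup_left, fun t i j v hij h => ?_⟩
    obtain ⟨-, f, hf, rfl⟩ := joinD_eq_some_iff.mp h
    exact (hf i j ((a.I ⊔ b.I).refl' i)).1 hij
  le_sup_right a b := by
    refine ⟨le_sup_right, fun t i j v hij h => ?_⟩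
    obtain ⟨-, f, hf, rfl⟩ := joinD_eq_some_iff.mp h
    exact (hf i j ((a.I ⊔ b.I).refl' i)).2 hij
  sup_le a b c ha hb := by
    have hK : a.I ⊔ b.I ≤ c.I := sup_le ha.1 hb.1
    refine ⟨hK, fun t i j v hij hv => joinD_eq_some_iff.mpr ?_⟩
    obtain ⟨f, hf⟩ := exists_coloring (by simp [hv] : c.d t i j ≠ none)
    refine ⟨hij, f, fun x y hx => ⟨fun hxy => ?_, fun hxy => ?_⟩, ?_⟩
    · exact ha.2 t x y _ hxy (hf x y (hK hx) (ha.1 hxy))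
    · exact hb.2 t x y _ hxy (hf x y (hK hx) (hb.1 hxy))
    · exact Option.some_inj.mp ((hf i j (c.I.refl' i) (hK hij)).symm.trans hv)

theorem sup_I : (a ⊔ b).I = a.I ⊔ b.I := rfl

theorem joinD_eq_none_of_left (h : a.d t i i = none) : joinD a b t i j = none := by
  by_contra hne
  obtain ⟨-, f, hf⟩ := joinD_ne_none_iff.mp hne
  simp [(hf i i ((a.I ⊔ b.I).refl' i)).1 (a.I.refl' i)] at h

theorem joinD_congr_left (hI : a.I = a'.I)
    (hd : ∀ x y, (a.I ⊔ b.I) i x → a.I x y → a.d t x y = a'.d t x y) :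
    joinD a b t i j = joinD a' b t i j := by
  have hcol : ∀ f, IsCommonColoring a b t i f ↔ IsCommonColoring a' b t i f := fun f => by
    unfold IsCommonColoring
    rw [← hI]
    exact forall₃_congr fun x y hx =>
      and_congr_left' (imp_congr_right fun hxy => by rw [hd x y hx hxy])
  refine Option.ext fun v => ?_
  rw [joinD_eq_some_iff, joinD_eq_some_iff, hI]
  simp only [hcol]

def AgreeOutside (a b : PColMat n m k) (t₀ : Fin m) (i₀ : Fin n) : Prop :=
  a.I = b.I ∧ ∀ t i j, ¬(t = t₀ ∧ a.I i i₀) → a.d t i j = b.d t i j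

theorem AgreeOutside.sup_right (h : AgreeOutside a a' t₀ i₀) (b : PColMat n m k) :
    AgreeOutside (a ⊔ b) (a' ⊔ b) t₀ i₀ := by
  refine ⟨by rw [sup_I, sup_I, h.1], fun t i j hti => joinD_congr_left h.1 fun x y hx _ => ?_⟩
  refine h.2 t x y fun ⟨ht, hx₀⟩ => hti ⟨ht, ?_⟩
  exact (a.I ⊔ b.I).trans' hx (le_sup_left (α := Setoid (Fin n)) hx₀)

theorem eq_or_eq_of_agreeOutside (h : AgreeOutside a b t₀ i₀) (hb : b.d t₀ i₀ i₀ = none)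
    (haz : a ≤ z) (hzb : z ≤ b) : z = a ∨ z = b := by
  have hIz : z.I = a.I := le_antisymm (h.1 ▸ hzb.1) haz.1
  have block : ∀ {i}, a.I i i₀ → (z.d t₀ i i = none ↔ z.d t₀ i₀ i₀ = none) := fun hi =>
    d_eq_none_congr (z.I.refl' _) (hIz ▸ hi) (hIz ▸ hi)
  by_cases hz : z.d t₀ i₀ i₀ = none
  · refine Or.inr (eq_of_le_of_d_self hzb (hIz.trans h.1) fun t i hzi => ?_)
    by_cases hti : t = t₀ ∧ a.I i i₀
    · obtain ⟨rfl, hi⟩ := hti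
      exact absurd ((block hi).mpr hz) hzi
    · obtain ⟨v, hv⟩ := Option.ne_none_iff_exists'.mp hzi
      rw [← h.2 t i i hti, haz.2 t i i v (a.I.refl' i) hv]
      exact Option.some_ne_none v
  · refine Or.inl (eq_of_le_of_d_self haz hIz.symm fun t i hai => ?_).symm
    by_cases hti : t = t₀ ∧ a.I i i₀
    · obtain ⟨rfl, hi⟩ := hti
      exact fun hzi => hz ((block hi).mp hzi)
    · obtain ⟨v, hv⟩ := Option.ne_none_iff_exists'.mp (h.2 t i i hti ▸ hai)
      rw [hzb.2 t i i v (z.I.refl' i) hv]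
      exact Option.some_ne_none v

def patch (a b : PColMat n m k) (t₀ : Fin m) (i₀ : Fin n) (hI : a.I = b.I) :
    PColMat n m k where
  I := a.I
  d t i j := if t = t₀ ∧ a.I i i₀ then a.d t i j else b.d t i j
  rel_of_def t i j h := by
    split_ifs at h
    · exact a.rel_of_def t i j h
    · exact hI ▸ b.rel_of_def t i j h
  big_of_def t i j h := by
    split_ifs at h
    · exact a.big_of_def t i j h
    · exact hI ▸ b.big_of_def t i j h
  uniform t i j i' j' hij hii' hij' h := by
    have hi' : a.I i i₀ ↔ a.I i' i₀ := ⟨a.I.trans' (a.I.symm' hii'), a.I.trans' hii'⟩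
    simp only [← hi']
    split_ifs at h ⊢
    · exact a.uniform t i j i' j' hij hii' hij' h
    · exact b.uniform t i j i' j' (hI ▸ hij) (hI ▸ hii') (hI ▸ hij') h
  cocycle t i j l v w hv hw := by
    have hij : a.I i j := by
      split_ifs at hv
      · exact a.rel_of_def t i j (by simp [hv])
      · exact hI ▸ b.rel_of_def t i j (by simp [hv])
    have hj : a.I i i₀ ↔ a.I j i₀ := ⟨a.I.trans' (a.I.symm' hij), a.I.trans' hij⟩
    simp only [hj] at hv ⊢
    split_ifs at hv hw ⊢
    · exact a.cocycle t i j l v w hv hw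
    · exact b.cocycle t i j l v w hv hw

theorem le_patch (hI : a.I = b.I) (hab : a ≤ b) : a ≤ patch a b t₀ i₀ hI := by
  refine ⟨le_rfl, fun t i j v hij h => ?_⟩
  change ite _ _ _ = some v at h
  split_ifs at h
  · exact h
  · exact hab.2 t i j v hij h

theorem patch_le (hI : a.I = b.I) (hb : b.d t₀ i₀ i₀ = none) : patch a b t₀ i₀ hI ≤ b := by
  refine ⟨hI.le, fun t i j v hij h => ?_⟩
  change ite _ _ _ = some v
  split_ifs with hti
  · obtain ⟨rfl, hi⟩ := hti
    have hi' : b.I i₀ i := hI ▸ a.I.symm' hi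
    rw [(d_eq_none_congr (b.I.refl' i₀) hi' (b.I.trans' hi' (hI ▸ hij))).mp hb] at h
    exact absurd h (Option.some_ne_none v).symm
  · exact h

end PColMat

instance {n m k : ℕ} {Γ : SimpleGraph (Fin n)} : SemilatticeSup (LkmG n m k Γ) :=
  Subtype.semilatticeSup fun _ _ => sup_mem_bondLattice

namespace LkmG

open PColMat

variable {n m k : ℕ} {Γ : SimpleGraph (Fin n)} {θ ν : LkmG n m k Γ}

theorem FiberCovBy.exists_agreeOutside (h : FiberCovBy θ ν) :
    ∃ t₀ i₀, ν.1.d t₀ i₀ i₀ = none ∧ AgreeOutside θ.1 ν.1 t₀ i₀ := by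
  obtain ⟨hI, hlt, hmin⟩ := h
  obtain ⟨t₀, i₀, hθ, hν⟩ : ∃ t₀ i₀, θ.1.d t₀ i₀ i₀ ≠ none ∧ ν.1.d t₀ i₀ i₀ = none := by
    by_contra! hcon
    exact hlt.ne (Subtype.ext (eq_of_le_of_d_self hlt.le hI hcon))
  let z : LkmG n m k Γ := ⟨patch θ.1 ν.1 t₀ i₀ hI, θ.2⟩
  have hzν : z < ν := by
    refine lt_of_le_of_ne (patch_le hI hν) fun hzν => hθ ?_
    have hd := congrArg (fun w : LkmG n m k Γ => w.1.d t₀ i₀ i₀) hzν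
    simpa [z, patch, if_pos (And.intro rfl (θ.1.I.refl' i₀)), hν] using hd
  have hzθ : z = θ := by
    by_contra hne
    exact hmin z hI (lt_of_le_of_ne (le_patch hI hlt.le) (Ne.symm hne)) hzν
  refine ⟨t₀, i₀, hν, hI, fun t i j hti => ?_⟩
  have hd := congrArg (fun w : LkmG n m k Γ => w.1.d t i j) hzθ
  simpa [z, patch, if_neg hti] using hd.symm

theorem covBy_or_eq_of_agreeOutside {a b : LkmG n m k Γ} {t₀ : Fin m} {i₀ : Fin n}
    (hab : a ≤ b) (h : AgreeOutside a.1 b.1 t₀ i₀) (hb : b.1.d t₀ i₀ i₀ = none) :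
    a ⋖ b ∨ a = b := by
  refine (eq_or_lt_of_le hab).symm.imp (fun hlt => ⟨hlt, fun z haz hzb => ?_⟩) id
  rcases eq_or_eq_of_agreeOutside h hb haz.le hzb.le with hz | hz
  · exact haz.ne (Subtype.ext hz.symm)
  · exact hzb.ne (Subtype.ext hz)

end LkmG

theorem statement11_general (n m k : ℕ) (Γ : SimpleGraph (Fin n)) :
    (∀ a b : LkmG n m k Γ, ∃ j, IsLUB {a, b} j) ∧
    (∀ a b j : LkmG n m k Γ, IsLUB {a, b} j → j.1.I = a.1.I ⊔ b.1.I) ∧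
    (∀ θ ν ψ jθ jν : LkmG n m k Γ, LkmG.FiberCovBy θ ν →
      IsLUB {θ, ψ} jθ → IsLUB {ν, ψ} jν → (jθ ⋖ jν ∨ jθ = jν)) := by
  refine ⟨fun a b => ⟨a ⊔ b, isLUB_pair⟩, fun a b j hj => by rw [hj.unique isLUB_pair]; rfl, ?_⟩
  intro θ ν ψ jθ jν hcov hθ hν
  obtain ⟨t₀, i₀, hν₀, hagree⟩ := hcov.exists_agreeOutside
  rw [hθ.unique isLUB_pair, hν.unique isLUB_pair]
  exact LkmG.covBy_or_eq_of_agreeOutside (sup_le_sup_right hcov.2.1.le ψ)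
    (hagree.sup_right ψ.1) (PColMat.joinD_eq_none_of_left hν₀)

/-- **Statement 11.** For any simple graph `Γ` on `[n]` and positive integers `k, m`:
the poset `L_k^m(Γ)` is a join semilattice, the projection `π : L_k^m(Γ) → L(Γ)`
preserves joins (the join in the bond lattice `L(Γ)` being the join `⊔` of partitions),
and if `θ ⋖ ν` in a fiber `C_I^m` and `ψ ∈ C_J^m`, then for the joins `jθ` of `{θ, ψ}`
and `jν` of `{ν, ψ}` one has `jθ ⋖ jν` or `jθ = jν` in `L_k^m(Γ)`. -/
theorem statement11 (n m k : ℕ) (hk : 0 < k) (hm : 0 < m) (Γ : SimpleGraph (Fin n)) :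
    (∀ a b : LkmG n m k Γ, ∃ j, IsLUB {a, b} j) ∧
    (∀ a b j : LkmG n m k Γ, IsLUB {a, b} j → j.1.I = a.1.I ⊔ b.1.I) ∧
    (∀ θ ν ψ jθ jν : LkmG n m k Γ, LkmG.FiberCovBy θ ν →
      IsLUB {θ, ψ} jθ → IsLUB {ν, ψ} jν → (jθ ⋖ jν ∨ jθ = jν)) :=
  statement11_general n m k Γ
end
end
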